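/- arXiv:0805.1473 — 8 statements merged into one kernel-verified Lean document; each statement's English description precedes it below -/
import Mathlib

section
/- There exists a function ll : ℚ → ℚ → ℚ such that for all a, a', b, b' ∈ ℚ: ll a b < ll a' b' if and only if (a ≤ 0 and a < a'), or (a = a' and a ≤ 0 and b < b'), or (0 < a and 0 < a' and b < b'). -/
/-!
Sending `(a, b)` to `inl (a, b)` in the lexicographic sum `(ℚ ×ₗ ℚ) ⊕ₗ ℚ` when `a ≤ 0` and to
`inr b` otherwise realises the required order exactly. The target is a countable linear order,
so by Cantor's theorem it embeds into `ℚ`, and composing with the embedding gives `ll`.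
-/

section SplitKey

variable {α β : Type*} [LinearOrder α] [LinearOrder β]

def splitKey (c : α) (a : α) (b : β) : (α ×ₗ β) ⊕ₗ β :=
  if a ≤ c then toLex (Sum.inl (toLex (a, b))) else toLex (Sum.inr b)

theorem splitKey_lt_splitKey_iff (c a a' : α) (b b' : β) :
    splitKey c a b < splitKey c a' b' ↔
      (a ≤ c ∧ a < a') ∨ (a = a' ∧ a ≤ c ∧ b < b') ∨ (c < a ∧ c < a' ∧ b < b') := by
  unfold splitKey
  by_cases ha : a ≤ c <;> by_cases ha' : a' ≤ c
  · rw [if_pos ha, if_pos ha', Sum.Lex.inl_lt_inl_iff, Prod.Lex.toLex_lt_toLex]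
    grind
  · rw [if_pos ha, if_neg ha']
    exact iff_of_true (Sum.Lex.inl_lt_inr _ _) (Or.inl ⟨ha, ha.trans_lt (not_le.mp ha')⟩)
  · rw [if_neg ha, if_pos ha']
    exact iff_of_false Sum.Lex.not_inr_lt_inl (by grind)
  · rw [if_neg ha, if_neg ha', Sum.Lex.inr_lt_inr_iff]
    grind

end SplitKey

/-- An ll operation. -/
theorem exists_ll_operation :
    ∃ ll : ℚ → ℚ → ℚ, ∀ a a' b b' : ℚ,
      ll a b < ll a' b' ↔
        ((a ≤ 0 ∧ a < a') ∨ (a = a' ∧ a ≤ 0 ∧ b < b') ∨ (0 < a ∧ 0 < a' ∧ b < b')) := by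
  -- `Lex` is a type synonym, so instance search does not see through it
  have : Countable ((ℚ ×ₗ ℚ) ⊕ₗ ℚ) := inferInstanceAs (Countable ((ℚ × ℚ) ⊕ ℚ))
  obtain ⟨e⟩ := Order.embedding_from_countable_to_dense ((ℚ ×ₗ ℚ) ⊕ₗ ℚ) ℚ
  exact ⟨fun a b => e (splitKey 0 a b), fun a a' b b' => by
    rw [e.lt_iff_lt, splitKey_lt_splitKey_iff]⟩
end

section
/- Let k : ℕ, let R ⊆ (Fin k → ℚ) be preserved by some lex operation, and let i : Fin k. If S₁ and S₂ are both min-sets for the i-th entry in R, then S₁ ∩ S₂ is a min-set for the i-th entry in R. -/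
/-- A lex operation on ℚ. -/
def IsLex (f : ℚ → ℚ → ℚ) : Prop :=
  ∀ a a' b b' : ℚ, f a b < f a' b' ↔ (a < a' ∨ (a = a' ∧ b < b'))

/-- A relation `R ⊆ (Fin k → ℚ)` is preserved by `f : ℚ → ℚ → ℚ`. -/
def Preserves {k : ℕ} (f : ℚ → ℚ → ℚ) (R : Set (Fin k → ℚ)) : Prop :=
  ∀ s ∈ R, ∀ t ∈ R, (fun j => f (s j) (t j)) ∈ R

/-- `S` is a min-set for the `i`-th entry in `R`. -/
def MinSet {k : ℕ} (R : Set (Fin k → ℚ)) (i : Fin k) (S : Set (Fin k)) : Prop :=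
  ∃ t ∈ R, (∀ j, t i ≤ t j) ∧ S = {j | t j = t i}

/-- Intersection of two min-sets is a min-set (for relations preserved by a lex operation). -/
theorem minSet_inter {k : ℕ} (R : Set (Fin k → ℚ)) (f : ℚ → ℚ → ℚ)
    (hf : IsLex f) (hR : Preserves f R) (i : Fin k) (S₁ S₂ : Set (Fin k))
    (h₁ : MinSet R i S₁) (h₂ : MinSet R i S₂) : MinSet R i (S₁ ∩ S₂) := by
  obtain ⟨t₁, ht₁R, ht₁min, hS₁⟩ := h₁
  obtain ⟨t₂, ht₂R, ht₂min, hS₂⟩ := h₂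
  have hle : ∀ j, f (t₁ i) (t₂ i) ≤ f (t₁ j) (t₂ j) := by
    intro j
    rcases lt_or_eq_of_le (ht₁min j) with h | h
    · exact ((hf _ _ _ _).2 (Or.inl h)).le
    · rcases lt_or_eq_of_le (ht₂min j) with h' | h'
      · exact ((hf _ _ _ _).2 (Or.inr ⟨h, h'⟩)).le
      · rw [h, h']
  refine ⟨fun j => f (t₁ j) (t₂ j), hR t₁ ht₁R t₂ ht₂R, hle, ?_⟩
  ext j
  simp only [hS₁, hS₂, Set.mem_inter_iff, Set.mem_setOf_eq]
  constructor
  · rintro ⟨e₁, e₂⟩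
    rw [e₁, e₂]
  · intro h
    have hnlt : ¬ f (t₁ i) (t₂ i) < f (t₁ j) (t₂ j) := not_lt_of_ge h.le
    rw [hf] at hnlt
    push_neg at hnlt
    have e₁ : t₁ j = t₁ i := le_antisymm hnlt.1 (ht₁min j)
    have e₂ : t₂ j = t₂ i :=
      le_antisymm (hnlt.2 e₁.symm) (ht₂min j)
    exact ⟨e₁, e₂⟩
end

section
/- Let k : ℕ, let R ⊆ (Fin k → ℚ) be preserved by some lex operation, and let i : Fin k. If there exists at least one min-set for the i-th entry in R, then there exists a minimal min-set for the i-th entry in R, i.e., a min-set for the i-th entry that is contained in every min-set for the i-th entry. -/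
/-- If there is a min-set for the `i`-th entry, there is a minimal one. -/
theorem exists_minimal_minSet {k : ℕ} (R : Set (Fin k → ℚ)) (f : ℚ → ℚ → ℚ)
    (hf : IsLex f) (hR : Preserves f R) (i : Fin k)
    (h : ∃ S, MinSet R i S) :
    ∃ S, MinSet R i S ∧ ∀ S', MinSet R i S' → S ⊆ S' := by
  -- min-sets are closed under intersection
  have hinter : ∀ S S', MinSet R i S → MinSet R i S' → MinSet R i (S ∩ S') := by
    rintro S S' ⟨t, ht, hm, rfl⟩ ⟨t', ht', hm', rfl⟩
    refine ⟨fun j => f (t j) (t' j), hR t ht t' ht', ?_, ?_⟩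
    · intro j
      by_contra hlt
      push_neg at hlt
      rcases (hf _ _ _ _).mp hlt with h1 | ⟨h1, h2⟩
      · exact absurd h1 (not_lt.mpr (hm j))
      · exact absurd h2 (not_lt.mpr (hm' j))
    · ext j
      simp only [Set.mem_inter_iff, Set.mem_setOf_eq]
      constructor
      · rintro ⟨h1, h2⟩
        rw [h1, h2]
      · intro heq
        have h1 : ¬ f (t j) (t' j) < f (t i) (t' i) := by rw [heq]; exact lt_irrefl _
        have h2 : ¬ f (t i) (t' i) < f (t j) (t' j) := by rw [heq]; exact lt_irrefl _
        rw [hf] at h1 h2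
        push_neg at h1 h2
        have htj : t j = t i := le_antisymm h2.1 (hm j)
        exact ⟨htj, le_antisymm (h2.2 htj.symm) (hm' j)⟩
  -- choose a min-set of minimal cardinality
  obtain ⟨S₀, hS₀⟩ := h
  set A : Set ℕ := {n | ∃ S, MinSet R i S ∧ S.ncard = n} with hA
  have hAne : A.Nonempty := ⟨S₀.ncard, S₀, hS₀, rfl⟩
  obtain ⟨S, hS, hcard⟩ : ∃ S, MinSet R i S ∧ S.ncard = sInf A := Nat.sInf_mem hAne
  refine ⟨S, hS, ?_⟩
  intro S' hS'
  have hISS' := hinter S S' hS hS'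
  have hle : S.ncard ≤ (S ∩ S').ncard := by
    rw [hcard]
    exact Nat.sInf_le ⟨S ∩ S', hISS', rfl⟩
  have hsub : S ∩ S' ⊆ S := Set.inter_subset_left
  have : S ∩ S' = S := Set.eq_of_subset_of_ncard_le hsub hle (Set.toFinite S)
  rw [← this]
  exact Set.inter_subset_right
end

section
/- Let k : ℕ, let R ⊆ (Fin k → ℚ) be preserved by some lex operation, let i : Fin k, and let S be a minimal min-set for the i-th entry in R. If t ∈ R satisfies t i ≤ t j for every j ∈ S, then t i = t j for every j ∈ S. -/
/-- Lemma 1 (lex-free-set-equal): if `t ∈ R` satisfies `t i ≤ t j` for every `j` in the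
minimal min-set `S` for the `i`-th entry, then `t i = t j` for every `j ∈ S`. -/
theorem minimal_minSet_forces_equality {k : ℕ} (R : Set (Fin k → ℚ)) (f : ℚ → ℚ → ℚ)
    (hf : IsLex f) (hR : Preserves f R) (i : Fin k) (S : Set (Fin k))
    (hS : MinSet R i S) (hSmin : ∀ S', MinSet R i S' → S ⊆ S')
    (t : Fin k → ℚ) (ht : t ∈ R) (hti : ∀ j ∈ S, t i ≤ t j) :
    ∀ j ∈ S, t i = t j := by
  obtain ⟨s, hsR, hsmin, hSeq⟩ := hS
  set u : Fin k → ℚ := fun j => f (s j) (t j) with hu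
  have huR : u ∈ R := hR s hsR t ht
  have humin : ∀ j, u i ≤ u j := by
    intro j
    by_contra h
    push_neg at h
    rcases (hf (s j) (s i) (t j) (t i)).mp h with h1 | ⟨h1, h2⟩
    · exact absurd (hsmin j) (not_le.mpr h1)
    · have hjS : j ∈ S := by rw [hSeq]; exact h1
      exact absurd (hti j hjS) (not_le.mpr h2)
  have hsub : S ⊆ {j | u j = u i} := hSmin _ ⟨u, huR, humin, rfl⟩
  intro j hjS
  by_contra hne
  have hlt : t i < t j := lt_of_le_of_ne (hti j hjS) hne
  have hsji : s j = s i := by have := hSeq ▸ hjS; exact this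
  have : u i < u j := (hf (s i) (s j) (t i) (t j)).mpr (Or.inr ⟨hsji.symm, hlt⟩)
  exact absurd (hsub hjS) (ne_of_gt this)
end

section
/- Let Φ be a temporal CSP instance over a finite set X such that every constraint relation of Φ is preserved by some lex operation, and let K be a sink component of the constraint graph G_Φ. Then for every solution t of Φ and all x, y ∈ K, t x = t y. -/
/-- A constraint over a variable set `X`: a triple `(k, R, v)` of an arity, a temporal
relation `R ⊆ (Fin k → ℚ)` and a scope `v : Fin k → X`. -/
structure Constraint (X : Type*) where
  k : ℕ
  R : Set (Fin k → ℚ)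
  scope : Fin k → X

/-- A temporal CSP instance is a finite family (list) of constraints; `t : X → ℚ` is a
solution if it satisfies every constraint. -/
def IsSolution {X : Type*} (Φ : List (Constraint X)) (t : X → ℚ) : Prop :=
  ∀ c ∈ Φ, (fun i => t (c.scope i)) ∈ c.R

/-- The edge relation of the constraint graph `G_Φ`. -/
def Edge {X : Type*} (Φ : List (Constraint X)) (x y : X) : Prop :=
  ∃ c ∈ Φ, ∃ i j : Fin c.k, c.scope i = x ∧ c.scope j = y ∧
    ∀ s ∈ c.R, (∀ m, s i ≤ s m) → (∀ m, s j ≤ s m)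

/-- A variable `y` is blocked in `Φ`. -/
def Blocked {X : Type*} (Φ : List (Constraint X)) (y : X) : Prop :=
  ∃ c ∈ Φ, ∃ i : Fin c.k, c.scope i = y ∧
    ¬ ∃ t : X → ℚ, ((fun i => t (c.scope i)) ∈ c.R ∧ ∀ m, t y ≤ t (c.scope m))

/-- `K` is a strongly connected component of the constraint graph `G_Φ`. -/
def IsSCC {X : Type*} (Φ : List (Constraint X)) (K : Set X) : Prop :=
  ∃ x ∈ K, K = {y | Relation.ReflTransGen (Edge Φ) x y ∧ Relation.ReflTransGen (Edge Φ) y x}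

/-- A sink component: a strongly connected component with no outgoing edges and
no blocked variables. -/
def SinkComponent {X : Type*} (Φ : List (Constraint X)) (K : Set X) : Prop :=
  IsSCC Φ K ∧ (∀ x ∈ K, ∀ y, Edge Φ x y → y ∈ K) ∧ (∀ x ∈ K, ¬ Blocked Φ x)


lemma lex_le_iff (f : ℚ → ℚ → ℚ) (hf : IsLex f) (a a' b b' : ℚ) :
    f a b ≤ f a' b' ↔ (a < a' ∨ (a = a' ∧ b ≤ b')) := by
  rw [← not_lt, hf a' a b' b]
  push_neg
  constructor
  · rintro ⟨h1, h2⟩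
    rcases lt_or_eq_of_le h1 with h | h
    · exact Or.inl h
    · exact Or.inr ⟨h, h2 h.symm⟩
  · rintro (h | ⟨he, hb⟩)
    · exact ⟨le_of_lt h, fun he => absurd he.symm (ne_of_lt h)⟩
    · exact ⟨le_of_eq he, fun _ => hb⟩

/-- Key lemma: if position `i` can be minimal in `R`, then there is a tuple `s ∈ R`
with `i` minimal such that every minimal position of `s` is minimal in every tuple
of `R` in which `i` is minimal. -/
lemma exists_good {k : ℕ} (R : Set (Fin k → ℚ)) (f : ℚ → ℚ → ℚ)
    (hf : IsLex f) (hp : Preserves f R) (i : Fin k)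
    (h0 : ∃ s ∈ R, ∀ m, s i ≤ s m) :
    ∃ s ∈ R, (∀ m, s i ≤ s m) ∧
      ∀ j, (∀ m, s j ≤ s m) →
        ∀ s' ∈ R, (∀ m, s' i ≤ s' m) → (∀ m, s' j ≤ s' m) := by
  classical
  set MinSet : (Fin k → ℚ) → Finset (Fin k) :=
    fun s => Finset.univ.filter (fun m => ∀ m', s m ≤ s m') with hMinSet
  have hmem : ∀ s m, m ∈ MinSet s ↔ ∀ m', s m ≤ s m' := by
    intro s m; simp [hMinSet]
  set N : Set ℕ := {n | ∃ s, (s ∈ R ∧ ∀ m, s i ≤ s m) ∧ (MinSet s).card = n} with hN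
  have hNne : N.Nonempty := by
    obtain ⟨s, hsR, hsi⟩ := h0
    exact ⟨(MinSet s).card, s, ⟨hsR, hsi⟩, rfl⟩
  obtain ⟨s, ⟨hsR, hsi⟩, hscard⟩ := Nat.sInf_mem hNne
  refine ⟨s, hsR, hsi, ?_⟩
  intro j hj s' hs'R hs'i
  by_contra hcon
  push_neg at hcon
  obtain ⟨m₀, hm₀⟩ := hcon
  set s'' : Fin k → ℚ := fun m => f (s m) (s' m) with hs''
  have hs''R : s'' ∈ R := hp s hsR s' hs'R
  have hs''i : ∀ m, s'' i ≤ s'' m := by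
    intro m
    rw [hs'', lex_le_iff f hf]
    rcases lt_or_eq_of_le (hsi m) with h | h
    · exact Or.inl h
    · exact Or.inr ⟨h, hs'i m⟩
  have hsub : ∀ m ∈ MinSet s'', m ∈ MinSet s ∧ ∀ m', s' m ≤ s' m' := by
    intro m hm
    rw [hmem] at hm
    have h1 : ∀ m', s m ≤ s m' := by
      intro m'
      have := hm m'
      rw [hs'', lex_le_iff f hf] at this
      rcases this with h | ⟨h, _⟩
      · exact le_of_lt h
      · exact le_of_eq h
    have heq : s m = s i := le_antisymm (h1 i) (hsi m)
    have h2 : s' m ≤ s' i := by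
      have := hm i
      rw [hs'', lex_le_iff f hf] at this
      rcases this with h | ⟨_, h⟩
      · exact absurd heq (ne_of_lt h)
      · exact h
    exact ⟨(hmem s m).2 h1, fun m' => le_trans h2 (hs'i m')⟩
  have hjmem : j ∈ MinSet s := (hmem s j).2 hj
  have hjnot : j ∉ MinSet s'' := by
    intro hjm
    exact absurd ((hsub j hjm).2 m₀) (not_le_of_gt hm₀)
  have hssub : MinSet s'' ⊂ MinSet s :=
    ⟨fun m hm => (hsub m hm).1, fun hs => hjnot (hs hjmem)⟩
  have hcard : (MinSet s'').card < (MinSet s).card := Finset.card_lt_card hssub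
  have : sInf N ≤ (MinSet s'').card := Nat.sInf_le ⟨s'', ⟨hs''R, hs''i⟩, rfl⟩
  omega

/-- Lemma 2 (component-contract): in an instance with lex-closed constraints, all
variables of a sink component take equal values in every solution. -/
theorem sinkComponent_variables_equal {X : Type*} [Fintype X]
    (Φ : List (Constraint X))
    (hlex : ∀ c ∈ Φ, ∃ f : ℚ → ℚ → ℚ, IsLex f ∧ Preserves f c.R)
    (K : Set X) (hK : SinkComponent Φ K)
    (t : X → ℚ) (ht : IsSolution Φ t) :
    ∀ x ∈ K, ∀ y ∈ K, t x = t y := by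
  classical
  obtain ⟨⟨x₀, hx₀K, hKeq⟩, hclosed, hnb⟩ := hK
  -- minimum of t over K
  obtain ⟨u, huK, humin⟩ :=
    Set.exists_min_image K t (Set.toFinite K) ⟨x₀, hx₀K⟩
  -- one-step propagation of the minimal value along edges
  have step : ∀ w ∈ K, t w = t u → ∀ v, Edge Φ w v → v ∈ K ∧ t v = t u := by
    intro w hwK hwt v hedge
    obtain ⟨c, hc, i, j, hsi, hsj, hedgeP⟩ := hedge
    have hvK : v ∈ K := hclosed w hwK v ⟨c, hc, i, j, hsi, hsj, hedgeP⟩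
    refine ⟨hvK, ?_⟩
    obtain ⟨f, hf, hp⟩ := hlex c hc
    -- unblockedness gives a tuple with i minimal
    have hub := hnb w hwK
    rw [Blocked] at hub
    push_neg at hub
    have h0 : ∃ s ∈ c.R, ∀ m, s i ≤ s m := by
      obtain ⟨t', ht'R, ht'min⟩ := hub c hc i hsi
      exact ⟨fun m => t' (c.scope m), ht'R, fun m => by
        have := ht'min m; rwa [← hsi] at this⟩
    obtain ⟨sg, hsgR, hsgi, hsggood⟩ := exists_good c.R f hf hp i h0
    -- every minimal position of sg maps into K
    have hKmem : ∀ m, (∀ m', sg m ≤ sg m') → c.scope m ∈ K := by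
      intro m hm
      exact hclosed w hwK _ ⟨c, hc, i, m, hsi, rfl, hsggood m hm⟩
    -- combine sg with the solution tuple
    set s₁ : Fin c.k → ℚ := fun m => f (sg m) (t (c.scope m)) with hs₁
    have hs₁R : s₁ ∈ c.R := hp sg hsgR _ (ht c hc)
    have hs₁i : ∀ m, s₁ i ≤ s₁ m := by
      intro m
      rw [hs₁, lex_le_iff f hf]
      rcases lt_or_eq_of_le (hsgi m) with h | h
      · exact Or.inl h
      · refine Or.inr ⟨h, ?_⟩
        have hmmin : ∀ m', sg m ≤ sg m' := fun m' => h ▸ hsgi m'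
        have := humin _ (hKmem m hmmin)
        rw [hsi, hwt]
        linarith
    have hs₁j := hedgeP s₁ hs₁R hs₁i i
    rw [hs₁, lex_le_iff f hf] at hs₁j
    have htv : t v ≤ t u := by
      rcases hs₁j with h | ⟨_, h⟩
      · exact absurd (hsgi j) (not_le_of_gt h)
      · rw [hsj, hsi, hwt] at h; exact h
    exact le_antisymm htv (humin v hvK)
  -- paths from u stay in K with the same value
  have path : ∀ y, Relation.ReflTransGen (Edge Φ) u y → y ∈ K ∧ t y = t u := by
    intro y hy
    induction hy with
    | refl => exact ⟨huK, rfl⟩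
    | tail _ hbc ih => exact step _ ih.1 ih.2 _ hbc
  have reach : ∀ y ∈ K, Relation.ReflTransGen (Edge Φ) u y := by
    intro y hyK
    have hu' := hKeq ▸ huK
    have hy' := hKeq ▸ hyK
    exact Relation.ReflTransGen.trans hu'.2 hy'.1
  intro x hx y hy
  rw [(path x (reach x hx)).2, (path y (reach y hy)).2]
end

section
/- Let Φ be a temporal CSP instance over a nonempty finite set X. If every strongly connected component K of the constraint graph G_Φ such that no edge of G_Φ goes from a vertex in K to a vertex outside K contains a variable that is blocked in Φ, then Φ has no solution. -/
/-- If every strongly connected component of `G_Φ` without outgoing edges contains a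
blocked variable, then `Φ` has no solution. -/
theorem no_solution_of_blocked_components {X : Type*} [Fintype X] [Nonempty X]
    (Φ : List (Constraint X))
    (h : ∀ K : Set X, IsSCC Φ K → (∀ x ∈ K, ∀ y, Edge Φ x y → y ∈ K) →
      ∃ y ∈ K, Blocked Φ y) :
    ¬ ∃ t : X → ℚ, IsSolution Φ t := by
  classical
  rintro ⟨t, ht⟩
  obtain ⟨x0, hx0⟩ := Finite.exists_min t
  have hmin_step : ∀ x y, (∀ z, t x ≤ t z) → Edge Φ x y → ∀ z, t y ≤ t z := by
    rintro x y hx ⟨c, hc, i, j, hi, hj, hR⟩ z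
    have hs : ∀ m, (fun i => t (c.scope i)) i ≤ (fun i => t (c.scope i)) m := fun m => by
      simpa [hi] using hx (c.scope m)
    have h2 := hR _ (ht c hc) hs
    calc t y = t (c.scope j) := by rw [hj]
      _ ≤ t (c.scope i) := h2 i
      _ = t x := by rw [hi]
      _ ≤ t z := hx z
  have hmin_rtg : ∀ y, Relation.ReflTransGen (Edge Φ) x0 y → ∀ z, t y ≤ t z := by
    intro y hy
    induction hy with
    | refl => exact hx0
    | tail _ e ih => exact hmin_step _ _ ih e
  let f : X → ℕ := fun y => (Finset.univ.filter (fun z => Relation.ReflTransGen (Edge Φ) y z)).card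
  obtain ⟨y, hyS, hymin⟩ := Finset.exists_min_image
    (Finset.univ.filter (fun z => Relation.ReflTransGen (Edge Φ) x0 z)) f
    ⟨x0, by simpa using Relation.ReflTransGen.refl⟩
  have hyreach : Relation.ReflTransGen (Edge Φ) x0 y := by simpa using hyS
  have hterm : ∀ z, Relation.ReflTransGen (Edge Φ) y z → Relation.ReflTransGen (Edge Φ) z y := by
    intro z hz
    by_contra hzy
    have hsub : (Finset.univ.filter (fun w => Relation.ReflTransGen (Edge Φ) z w)) ⊆
        (Finset.univ.filter (fun w => Relation.ReflTransGen (Edge Φ) y w)) := by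
      intro w hw
      simp only [Finset.mem_filter, Finset.mem_univ, true_and] at hw ⊢
      exact hz.trans hw
    have hss := (Finset.ssubset_iff_of_subset hsub).mpr
      ⟨y, by simpa using Relation.ReflTransGen.refl, by simpa using hzy⟩
    have hlt : f z < f y := Finset.card_lt_card hss
    have hle : f y ≤ f z := hymin z (by
      simp only [Finset.mem_filter, Finset.mem_univ, true_and]
      exact hyreach.trans hz)
    omega
  set K : Set X := {w | Relation.ReflTransGen (Edge Φ) y w ∧ Relation.ReflTransGen (Edge Φ) w y}
    with hK
  have hSCC : IsSCC Φ K := ⟨y, ⟨Relation.ReflTransGen.refl, Relation.ReflTransGen.refl⟩, rfl⟩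
  have hclosed : ∀ a ∈ K, ∀ b, Edge Φ a b → b ∈ K := by
    rintro a ⟨hya, hay⟩ b hab
    have h1 : Relation.ReflTransGen (Edge Φ) y b := hya.tail hab
    exact ⟨h1, hterm b h1⟩
  obtain ⟨w, hwK, hwb⟩ := h K hSCC hclosed
  have hwmin : ∀ z, t w ≤ t z := hmin_rtg w (hyreach.trans hwK.1)
  obtain ⟨c, hc, i, hi, hno⟩ := hwb
  exact hno ⟨t, ht c hc, fun m => hwmin _⟩
end

section
/- Let Φ be a temporal CSP instance with ll-closed constraints over a finite set X. If Φ has a solution but has no injective solution, then there exist distinct variables x, y ∈ X such that every solution t of Φ satisfies t x = t y. -/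
/-- An ll operation on ℚ. -/
def IsLL (f : ℚ → ℚ → ℚ) : Prop :=
  ∀ a a' b b' : ℚ, f a b < f a' b' ↔
    ((a ≤ 0 ∧ a < a') ∨ (a = a' ∧ a ≤ 0 ∧ b < b') ∨ (0 < a ∧ 0 < a' ∧ b < b'))

/-- A relation is closed under all order-automorphisms of ℚ. -/
def AutoClosed {k : ℕ} (R : Set (Fin k → ℚ)) : Prop :=
  ∀ t ∈ R, ∀ α : ℚ → ℚ, StrictMono α → Function.Bijective α → (fun j => α (t j)) ∈ R

/-- An instance has ll-closed constraints. -/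
def LLClosed {X : Type*} (Φ : List (Constraint X)) : Prop :=
  ∀ c ∈ Φ, AutoClosed c.R ∧ ∃ f : ℚ → ℚ → ℚ, IsLL f ∧ Preserves f c.R

/-!
A relation that is closed under automorphisms of `ℚ` and preserved by an ll operation `f`
contains, together with any two tuples `s` and `t`, every tuple ordered like their
lexicographic combination: after shifting `s` below `0`, the tuple `f (s - M) t` is ordered
lexicographically, and automorphisms of `ℚ` act transitively on tuples of a given order type.
So the lexicographic combination of two solutions is again a solution, and its equalities are
exactly those shared by both. Merging in this way one solution separating each pair of
variables that is not forced equal gives a solution whose equalities are all forced; since it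
is not injective, two distinct variables are forced equal.
-/

open FirstOrder Language in
/-- This is the ultrahomogeneity of `α` as the Fraïssé limit of the finite linear orders. -/
theorem exists_orderIso_eqOn_of_strictMonoOn {α : Type*} [LinearOrder α] [Countable α]
    [DenselyOrdered α] [NoMinOrder α] [NoMaxOrder α] [Nonempty α]
    {A : Set α} (hA : A.Finite) {h : α → α} (hh : StrictMonoOn h A) :
    ∃ β : α ≃o α, Set.EqOn β h A := by
  let := orderStructure α
  have : Language.order.OrderedStructure α := ⟨fun _ => Iff.rfl⟩
  let S : Language.order.Substructure α := Substructure.closure Language.order A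
  have hS : (S : Set α) = A := Substructure.closure_eq_of_isRelational _ A
  let f : S ↪o α := OrderEmbedding.ofStrictMono (fun x => h x)
    (fun x y hxy => hh (hS ▸ x.2) (hS ▸ y.2) hxy)
  obtain ⟨g, hg⟩ := (isFraisseLimit_of_countable_nonempty_dlo α).ultrahomogeneous S
    (Substructure.fg_def.2 ⟨A, hA, rfl⟩) (StrongHomClass.toEmbedding f)
  let := StrongHomClass.toOrderIsoClass Language.order α α (α ≃[Language.order] α)
  exact ⟨g, fun a ha => (DFunLike.congr_fun hg ⟨a, (hS.symm ▸ ha : a ∈ (S : Set α))⟩).symm⟩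

theorem exists_orderIso_comp_eq {ι α : Type*} [Finite ι] [LinearOrder α] [Countable α]
    [DenselyOrdered α] [NoMinOrder α] [NoMaxOrder α] [Nonempty α]
    {v w : ι → α} (hvw : ∀ i j, v i < v j ↔ w i < w j) : ∃ β : α ≃o α, β ∘ v = w := by
  have hfac : w.FactorsThrough v := fun i j hij =>
    le_antisymm (not_lt.1 fun h => ((hvw j i).2 h).ne' hij)
      (not_lt.1 fun h => ((hvw i j).2 h).ne hij)
  have hmono : StrictMonoOn (Function.extend v w id) (Set.range v) := by
    rintro _ ⟨i, rfl⟩ _ ⟨j, rfl⟩ hij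
    simpa only [hfac.extend_apply] using (hvw i j).1 hij
  obtain ⟨β, hβ⟩ := exists_orderIso_eqOn_of_strictMonoOn (Set.finite_range v) hmono
  exact ⟨β, funext fun i => (hβ ⟨i, rfl⟩).trans (hfac.extend_apply id i)⟩

/-- The lexicographic square `ℚ ×ₗ ℚ` is countable, hence embeds in the dense order `ℚ`. -/
theorem exists_lex_combination {X : Type*} (s t : X → ℚ) :
    ∃ u : X → ℚ, (∀ x y, u x < u y ↔ s x < s y ∨ s x = s y ∧ t x < t y) ∧
      ∀ x y, u x = u y ↔ s x = s y ∧ t x = t y := by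
  have : Countable (ℚ ×ₗ ℚ) := inferInstanceAs (Countable (ℚ × ℚ))
  obtain ⟨e⟩ := Order.embedding_from_countable_to_dense (α := ℚ ×ₗ ℚ) (β := ℚ)
  refine ⟨fun x => e (toLex (s x, t x)), fun x y => ?_, fun x y => ?_⟩
  · rw [e.lt_iff_lt, Prod.Lex.toLex_lt_toLex]
  · rw [e.eq_iff_eq, toLex_inj, Prod.ext_iff]

theorem IsLL.lt_iff_of_nonpos {f : ℚ → ℚ → ℚ} (hf : IsLL f) {a a' b b' : ℚ}
    (ha : a ≤ 0) : f a b < f a' b' ↔ a < a' ∨ a = a' ∧ b < b' := by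
  rw [hf]
  constructor
  · rintro (⟨-, h⟩ | ⟨h, -, hb⟩ | ⟨h, -⟩)
    exacts [Or.inl h, Or.inr ⟨h, hb⟩, absurd h ha.not_gt]
  · rintro (h | ⟨h, hb⟩)
    exacts [Or.inl ⟨ha, h⟩, Or.inr (Or.inl ⟨h, ha, hb⟩)]

theorem AutoClosed.mem_of_lt_iff {k : ℕ} {R : Set (Fin k → ℚ)} (hR : AutoClosed R)
    {s u : Fin k → ℚ} (hs : s ∈ R) (hsu : ∀ i j, s i < s j ↔ u i < u j) : u ∈ R := by
  obtain ⟨β, rfl⟩ := exists_orderIso_comp_eq hsu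
  exact hR s hs β β.strictMono β.bijective

theorem AutoClosed.mem_of_lex {k : ℕ} {R : Set (Fin k → ℚ)} (hR : AutoClosed R)
    {f : ℚ → ℚ → ℚ} (hf : IsLL f) (hfR : Preserves f R) {s t u : Fin k → ℚ}
    (hs : s ∈ R) (ht : t ∈ R) (hu : ∀ i j, u i < u j ↔ s i < s j ∨ s i = s j ∧ t i < t j) :
    u ∈ R := by
  obtain ⟨M, hM⟩ := (Set.finite_range s).bddAbove
  have hsM : ∀ i, s i - M ≤ 0 := fun i => sub_nonpos.2 (hM ⟨i, rfl⟩)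
  -- Shifting `s` below `0` puts `f` in the range where it compares lexicographically.
  have hs' : (fun i => s i - M) ∈ R :=
    hR.mem_of_lt_iff hs fun i j => (sub_lt_sub_iff_right M).symm
  refine hR.mem_of_lt_iff (hfR _ hs' t ht) fun i j => ?_
  rw [hf.lt_iff_of_nonpos (hsM i), sub_lt_sub_iff_right, sub_left_inj, hu]

theorem LLClosed.isSolution_of_lex {X : Type*} {Φ : List (Constraint X)} (hΦ : LLClosed Φ)
    {s t u : X → ℚ} (hs : IsSolution Φ s) (ht : IsSolution Φ t)
    (hu : ∀ x y, u x < u y ↔ s x < s y ∨ s x = s y ∧ t x < t y) : IsSolution Φ u := by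
  intro c hc
  obtain ⟨hR, f, hf, hfR⟩ := hΦ c hc
  exact hR.mem_of_lex hf hfR (hs c hc) (ht c hc) fun i j => hu _ _

theorem LLClosed.exists_isSolution_eq_iff {X : Type*} {Φ : List (Constraint X)}
    (hΦ : LLClosed Φ) {s t : X → ℚ} (hs : IsSolution Φ s) (ht : IsSolution Φ t) :
    ∃ u, IsSolution Φ u ∧ ∀ x y, u x = u y ↔ s x = s y ∧ t x = t y := by
  obtain ⟨u, hlt, heq⟩ := exists_lex_combination s t
  exact ⟨u, hΦ.isSolution_of_lex hs ht hlt, heq⟩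

/-- Merge, pair by pair, a solution separating each pair of variables that is not forced
equal. -/
theorem LLClosed.exists_isSolution_eq_imp_forced {X : Type*} [Finite X]
    {Φ : List (Constraint X)} (hΦ : LLClosed Φ) (hsol : ∃ t, IsSolution Φ t) :
    ∃ u, IsSolution Φ u ∧ ∀ x y, u x = u y → ∀ t, IsSolution Φ t → t x = t y := by
  classical
  have := Fintype.ofFinite X
  suffices ∀ P : Finset (X × X), ∃ u, IsSolution Φ u ∧
      ∀ p ∈ P, u p.1 = u p.2 → ∀ t, IsSolution Φ t → t p.1 = t p.2 by
    obtain ⟨u, hu, hforced⟩ := this Finset.univ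
    exact ⟨u, hu, fun x y => hforced (x, y) (Finset.mem_univ _)⟩
  intro P
  induction P using Finset.induction_on with
  | empty => simpa using hsol
  | insert p P _ ih =>
    obtain ⟨u, hu, hforced⟩ := ih
    by_cases hp : ∀ t, IsSolution Φ t → t p.1 = t p.2
    · exact ⟨u, hu, Finset.forall_mem_insert _ _ _ |>.2 ⟨fun _ => hp, hforced⟩⟩
    obtain ⟨t, ht, htp⟩ := not_forall₂.1 hp
    obtain ⟨w, hw, hweq⟩ := hΦ.exists_isSolution_eq_iff hu ht
    refine ⟨w, hw, Finset.forall_mem_insert _ _ _ |>.2 ⟨fun h => ?_, fun q hq h => ?_⟩⟩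
    · exact absurd ((hweq _ _).1 h).2 htp
    · exact hforced q hq ((hweq _ _).1 h).1

/-- If an instance with ll-closed constraints has a solution but no injective solution,
then some two distinct variables are equal in all solutions. -/
theorem exists_forced_equality {X : Type*} [Fintype X]
    (Φ : List (Constraint X)) (hΦ : LLClosed Φ)
    (hsol : ∃ t : X → ℚ, IsSolution Φ t)
    (hninj : ¬ ∃ t : X → ℚ, Function.Injective t ∧ IsSolution Φ t) :
    ∃ x y : X, x ≠ y ∧ ∀ t : X → ℚ, IsSolution Φ t → t x = t y := by
  obtain ⟨u, hu, hforced⟩ := hΦ.exists_isSolution_eq_imp_forced hsol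
  obtain ⟨x, y, hxy, hne⟩ := Function.not_injective_iff.1 fun hinj => hninj ⟨u, hinj, hu⟩
  exact ⟨x, y, hne, hforced x y hxy⟩
end

section
/- Let ll be an ll operation, let k : ℕ, let i : Fin k, and let t, s : Fin k → ℚ be tuples such that t i < t j for all j ≠ i. Then there exist order-automorphisms α and β of ℚ such that the tuple t'' defined by t'' j = α (ll (β (t j)) (s j)) satisfies t'' j = s j for all j ≠ i, and t'' i < s j for all j ≠ i. -/
/-!
For `a > 0` the value `ll a b` does not depend on `a`, and `g := ll 1` is strictly increasing
with every value above every `ll 0 b`. Translating by `-t i` sends `t i` to `0` and the other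
entries of `t` to positive numbers, so the tuple becomes `g (s j)` for `j ≠ i` and
`ll 0 (s i) < g (s j)` at `i`. The map sending `s j` to `g (s j)` and a point `m` below all
`s j` to `ll 0 (s i)` is strictly increasing on a finite set, hence agrees there with an order
automorphism `e` of `ℚ`, and `α := e⁻¹` does the job.
-/

lemma OrderIso.exists_eqOn_Iic_eqOn_Ioi {α β : Type*} [LinearOrder α] [LinearOrder β]
    (f g : α ≃o β) {a : α} (h : f a = g a) :
    ∃ e : α ≃o β, Set.EqOn e f (Set.Iic a) ∧ Set.EqOn e g (Set.Ioi a) := by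
  let F : α → β := fun x => if x ≤ a then f x else g x
  have hF : StrictMono F := by
    intro x y hxy
    by_cases hy : y ≤ a
    · simp [F, hy, hxy.le.trans hy, hxy]
    by_cases hx : x ≤ a
    · simp only [F, hx, hy, if_true, if_false]
      calc f x ≤ f a := f.monotone hx
        _ = g a := h
        _ < g y := g.strictMono (not_le.1 hy)
    · simp [F, hx, hy, hxy]
  have hF_surj : Function.Surjective F := by
    intro z
    by_cases hz : z ≤ f a
    · exact ⟨f.symm z, by simp [F, f.symm_apply_le.2 hz]⟩
    · have : ¬ g.symm z ≤ a := by rwa [g.symm_apply_le, ← h]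
      exact ⟨g.symm z, by simp [F, this]⟩
  refine ⟨hF.orderIsoOfSurjective F hF_surj, fun x hx => ?_, fun x hx => ?_⟩
  · simp [F, Set.mem_Iic.1 hx]
  · simp [F, not_le.2 (Set.mem_Ioi.1 hx)]

lemma exists_orderIso_apply_eq {G : Type*} [AddGroup G] [LE G] [AddLeftMono G] (a b : G) :
    ∃ e : G ≃o G, e a = b :=
  ⟨OrderIso.addLeft (b - a), by simp⟩

section LinearOrderedField

variable {K : Type*} [Field K] [LinearOrder K] [IsStrictOrderedRing K]

lemma exists_orderIso_apply_eq_apply_eq {a₁ a₂ b₁ b₂ : K} (ha : a₁ < a₂) (hb : b₁ < b₂) :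
    ∃ e : K ≃o K, e a₁ = b₁ ∧ e a₂ = b₂ := by
  have hc : 0 < (b₂ - b₁) / (a₂ - a₁) := div_pos (sub_pos.2 hb) (sub_pos.2 ha)
  refine ⟨(OrderIso.addRight (-a₁)).trans ((OrderIso.mulRight₀ _ hc).trans (OrderIso.addRight b₁)),
    by simp, ?_⟩
  simp only [OrderIso.trans_apply, OrderIso.addRight_apply, OrderIso.mulRight₀_apply]
  field_simp [(sub_pos.2 ha).ne']
  ring

theorem StrictMonoOn.exists_orderIso_eqOn {f : K → K} {A : Finset K}
    (hf : StrictMonoOn f A) : ∃ e : K ≃o K, Set.EqOn e f A := by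
  induction A using Finset.induction_on_max with
  | empty => exact ⟨OrderIso.refl K, by simp⟩
  | insert a s hlt ih =>
    rw [Finset.coe_insert] at hf ⊢
    obtain ⟨e, he⟩ := ih (hf.mono (Set.subset_insert a _))
    rcases s.eq_empty_or_nonempty with rfl | hs
    · obtain ⟨d, hd⟩ := exists_orderIso_apply_eq a (f a)
      exact ⟨d, by simpa using hd⟩
    -- keep `e` up to the largest point `b` of `s`, and interpolate affinely from `b` to `a`
    set b := s.max' hs
    have hb : b < a := hlt b (s.max'_mem hs)
    have hfb : f b < f a := hf (Or.inr (s.max'_mem hs)) (Set.mem_insert a _) hb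
    obtain ⟨d, hdb, hda⟩ := exists_orderIso_apply_eq_apply_eq hb hfb
    obtain ⟨g, hge, hgd⟩ := e.exists_eqOn_Iic_eqOn_Ioi (h := (he (s.max'_mem hs)).trans hdb.symm)
    refine ⟨g, fun x hx => ?_⟩
    rcases hx with rfl | hx
    · rw [hgd hb, hda]
    · rw [hge (s.le_max' x hx), he hx]

end LinearOrderedField

namespace IsLL

variable {ll : ℚ → ℚ → ℚ}

lemma apply_eq_of_pos (hll : IsLL ll) {a a' : ℚ} (ha : 0 < a) (ha' : 0 < a') (b : ℚ) :
    ll a b = ll a' b := by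
  refine le_antisymm (not_lt.1 fun h => ?_) (not_lt.1 fun h => ?_) <;>
    rw [hll] at h <;>
    rcases h with ⟨h1, h2⟩ | ⟨h1, h2, h3⟩ | ⟨h1, h2, h3⟩ <;> linarith

lemma strictMono_of_pos (hll : IsLL ll) {a : ℚ} (ha : 0 < a) : StrictMono (ll a) :=
  fun _ _ hb => (hll _ _ _ _).2 (Or.inr (Or.inr ⟨ha, ha, hb⟩))

lemma lt_of_nonpos_of_lt (hll : IsLL ll) {a a' : ℚ} (ha : a ≤ 0) (h : a < a') (b b' : ℚ) :
    ll a b < ll a' b' :=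
  (hll _ _ _ _).2 (Or.inl ⟨ha, h⟩)

end IsLL

/-- If the `i`-th entry of `t` is strictly minimal, then there are order-automorphisms
`α, β` of ℚ such that the tuple `t'' j = α (ll (β (t j)) (s j))` agrees with `s` outside
of `i` and its `i`-th entry is strictly smaller than all `s j` for `j ≠ i`. -/
theorem ll_strictly_minimal_combination (ll : ℚ → ℚ → ℚ) (hll : IsLL ll)
    (k : ℕ) (i : Fin k) (t s : Fin k → ℚ) (ht : ∀ j, j ≠ i → t i < t j) :
    ∃ α β : ℚ → ℚ,
      StrictMono α ∧ Function.Bijective α ∧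
      StrictMono β ∧ Function.Bijective β ∧
      (∀ j, j ≠ i → α (ll (β (t j)) (s j)) = s j) ∧
      (∀ j, j ≠ i → α (ll (β (t i)) (s i)) < s j) := by
  obtain ⟨m, hms⟩ : ∃ m, ∀ j, m < s j :=
    let ⟨c, hc⟩ := (Set.finite_range s).bddBelow
    ⟨c - 1, fun j => by linarith [hc (Set.mem_range_self j)]⟩
  let A : Finset ℚ := insert m (Finset.univ.image s)
  have hA : ∀ x ∈ A, m ≤ x := by
    simpa [A] using fun j => (hms j).le
  have hf : StrictMonoOn (fun b => if b ≤ m then ll 0 (s i) else ll 1 b) A := by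
    intro x hx y _ hxy
    have hy' : ¬ y ≤ m := fun h => hxy.not_ge (h.trans (hA x hx))
    by_cases hx' : x ≤ m
    · simpa [hx', hy'] using hll.lt_of_nonpos_of_lt le_rfl one_pos (s i) y
    · simpa [hx', hy'] using hll.strictMono_of_pos one_pos hxy
  obtain ⟨e, he⟩ := hf.exists_orderIso_eqOn
  let β := OrderIso.addRight (-t i)
  refine ⟨e.symm, β, e.symm.strictMono, e.symm.bijective, β.strictMono, β.bijective,
    fun j hj => ?_, fun j hj => ?_⟩
  · have hβ : 0 < β (t j) := by simpa [β] using ht j hj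
    rw [hll.apply_eq_of_pos hβ one_pos, e.symm_apply_eq, he (show s j ∈ A by simp [A])]
    simp [(hms j).not_ge]
  · have hv : e m = ll (β (t i)) (s i) := by simpa [β] using he (show m ∈ A by simp [A])
    rw [← hv, e.symm_apply_apply]
    exact hms j
end
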